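/- Let n ≥ 3, let R = ℂ[x₁,…,x_n, y₁,…,y_n] / ⟨∑_{i=1}^n x_i y_i − 1⟩, and let K be the fraction field of R, with the SL_n(ℂ)-action on R extended to K by field automorphisms. Let ν be an additive ℚ-valued valuation on K (satisfying ν(fg) = ν(f) + ν(g) and ν(f + g) ≥ min(ν(f), ν(g)), with ν(0) = ∞) such that ν(c) = 0 for every nonzero constant c ∈ ℂ^× and ν(g·f) = ν(f) for every g ∈ SL_n(ℂ) and every f ∈ K. Then ν(x̄_n) + ν(ȳ₁) ≤ 0. -/

import Mathlib

/-!
Write `c = ν(x̄ₙ) + ν(ȳ₁)`. Signed transpositions lie in `SL_n(ℂ)` and move `x̄_b, ȳ_b` to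
`x̄_a, ȳ_a` simultaneously, so invariance gives `ν(x̄ᵢ ȳᵢ) = c` for every `i`. The ultrametric
inequality then bounds the valuation of `∑ᵢ x̄ᵢ ȳᵢ = 1` from below by `c`, and `ν(1) = 0`.
-/

set_option synthInstance.maxHeartbeats 1000000
set_option maxHeartbeats 1000000

open MvPolynomial

/-- The defining ideal of `ℂ[x₁,…,xₙ,y₁,…,yₙ]/⟨∑ xᵢ yᵢ − 1⟩`, where the `x` variables are
indexed by `Sum.inl` and the `y` variables by `Sum.inr`. -/
noncomputable def relIdeal (n : ℕ) : Ideal (MvPolynomial (Fin n ⊕ Fin n) ℂ) :=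
  Ideal.span {(∑ i : Fin n, X (Sum.inl i) * X (Sum.inr i)) - 1}

/-- The coordinate ring `R = ℂ[x₁,…,xₙ,y₁,…,yₙ]/⟨∑ xᵢ yᵢ − 1⟩` of `SL_n(ℂ)/SL_{n-1}(ℂ)`. -/
noncomputable abbrev Rn (n : ℕ) := MvPolynomial (Fin n ⊕ Fin n) ℂ ⧸ relIdeal n

/-- The substitution action of `g ∈ SL_n(ℂ)` on the polynomial ring: `g · x_j = ∑ i (g⁻¹)_{ji} x_i`
and `g · y_j = ∑ i (gᵀ)_{ji} y_i`, induced by the action `A · (v, w) = (A v, (Aᵀ)⁻¹ w)`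
via `(g · f)(v, w) = f(g⁻¹ · (v, w))`. -/
noncomputable def slAct (n : ℕ) (g : Matrix.SpecialLinearGroup (Fin n) ℂ) :
    MvPolynomial (Fin n ⊕ Fin n) ℂ →ₐ[ℂ] MvPolynomial (Fin n ⊕ Fin n) ℂ :=
  aeval (fun v => match v with
    | Sum.inl j => ∑ i : Fin n, (g.val⁻¹ j i) • X (Sum.inl i)
    | Sum.inr j => ∑ i : Fin n, (g.val i j) • X (Sum.inr i))

/-- The image of a polynomial in the fraction field `K` of `R`. -/
noncomputable def toK (n : ℕ) (p : MvPolynomial (Fin n ⊕ Fin n) ℂ) : FractionRing (Rn n) :=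
  algebraMap (Rn n) (FractionRing (Rn n)) (Ideal.Quotient.mk (relIdeal n) p)


section Ultrametric

variable {K Γ : Type*} [AddCommMonoid K] [LinearOrder Γ]

lemma sum_eq_zero_or_le_apply_sum (ν : K → Γ)
    (hadd : ∀ f g : K, f ≠ 0 → g ≠ 0 → f + g ≠ 0 → min (ν f) (ν g) ≤ ν (f + g))
    {ι : Type*} (s : Finset ι) (f : ι → K) (c : Γ)
    (hf : ∀ i ∈ s, f i = 0 ∨ c ≤ ν (f i)) :
    ∑ i ∈ s, f i = 0 ∨ c ≤ ν (∑ i ∈ s, f i) := by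
  refine Finset.sum_induction f (fun x => x = 0 ∨ c ≤ ν x) ?_ (Or.inl rfl) hf
  rintro x y (rfl | hx) (rfl | hy)
  · simp
  · simp [hy]
  · simp [hx]
  obtain rfl | hx0 := eq_or_ne x 0
  · simp [hy]
  obtain rfl | hy0 := eq_or_ne y 0
  · simp [hx]
  by_cases hxy : x + y = 0
  · exact Or.inl hxy
  · exact Or.inr ((le_min hx hy).trans (hadd x y hx0 hy0 hxy))

end Ultrametric

section Coordinates

variable {n : ℕ}

lemma toK_ne_zero_of_eval_ne_zero {x : Fin n ⊕ Fin n → ℂ}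
    (hx : ∑ i : Fin n, x (Sum.inl i) * x (Sum.inr i) = 1)
    {p : MvPolynomial (Fin n ⊕ Fin n) ℂ} (hp : eval x p ≠ 0) : toK n p ≠ 0 := by
  intro h
  rw [toK, IsFractionRing.to_map_eq_zero_iff, Ideal.Quotient.eq_zero_iff_mem, relIdeal,
    Ideal.mem_span_singleton'] at h
  obtain ⟨q, rfl⟩ := h
  simp [hx] at hp

lemma toK_X_ne_zero (v : Fin n ⊕ Fin n) : toK n (X v) ≠ 0 := by
  cases v with
  | inl i | inr i =>
    exact toK_ne_zero_of_eval_ne_zero (x := Sum.elim (Pi.single i 1) (Pi.single i 1))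
      (by simp [Pi.single_apply]) (by simp)

instance [NeZero n] : Nontrivial (FractionRing (Rn n)) :=
  ⟨⟨toK n (X (Sum.inl 0)), 0, toK_X_ne_zero _⟩⟩

lemma sum_toK_X_mul_X :
    ∑ i : Fin n, toK n (X (Sum.inl i)) * toK n (X (Sum.inr i)) = 1 := by
  have : Ideal.Quotient.mk (relIdeal n) (∑ i : Fin n, X (Sum.inl i) * X (Sum.inr i)) = 1 := by
    rw [← map_one (Ideal.Quotient.mk _), Ideal.Quotient.eq]
    exact Ideal.subset_span rfl
  simp only [toK, ← map_mul, ← map_sum, this, map_one]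

end Coordinates

section SignedSwap

open Matrix

variable {n : ℕ}

lemma slAct_X_inl (g : SpecialLinearGroup (Fin n) ℂ) (j : Fin n) :
    slAct n g (X (Sum.inl j)) = ∑ i, g.val⁻¹ j i • X (Sum.inl i) :=
  aeval_X _ _

lemma slAct_X_inr (g : SpecialLinearGroup (Fin n) ℂ) (j : Fin n) :
    slAct n g (X (Sum.inr j)) = ∑ i, g.val i j • X (Sum.inr i) :=
  aeval_X _ _

noncomputable def signFlip (a : Fin n) : Matrix (Fin n) (Fin n) ℂ :=
  diagonal (Function.update 1 a (-1))

lemma signFlip_mul_self (a : Fin n) : signFlip a * signFlip a = 1 := by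
  rw [signFlip, diagonal_mul_diagonal, ← diagonal_one]
  congr 1
  ext k
  by_cases hk : k = a <;> simp [hk]

lemma swap_permMatrix_mul_self (a b : Fin n) :
    (Equiv.swap a b).permMatrix ℂ * (Equiv.swap a b).permMatrix ℂ = 1 := by
  rw [← permMatrix_mul, Equiv.swap_mul_self, permMatrix_one]

/-- The signed transposition `e_b ↦ e_a`, `e_a ↦ -e_b`. -/
noncomputable def signedSwap {a b : Fin n} (hab : a ≠ b) : SpecialLinearGroup (Fin n) ℂ :=
  ⟨(Equiv.swap a b).permMatrix ℂ * signFlip a, by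
    simp [signFlip, Equiv.Perm.sign_swap hab, Function.update_apply]⟩

lemma signedSwap_inv {a b : Fin n} (hab : a ≠ b) :
    (signedSwap hab).val⁻¹ = signFlip a * (Equiv.swap a b).permMatrix ℂ := by
  refine inv_eq_right_inv ?_
  rw [signedSwap, Matrix.mul_assoc, ← Matrix.mul_assoc (signFlip a), signFlip_mul_self,
    Matrix.one_mul, swap_permMatrix_mul_self]

lemma exists_slAct_X_eq (a b : Fin n) : ∃ g : SpecialLinearGroup (Fin n) ℂ,
    slAct n g (X (Sum.inl b)) = X (Sum.inl a) ∧ slAct n g (X (Sum.inr b)) = X (Sum.inr a) := by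
  obtain rfl | hab := eq_or_ne a b
  · exact ⟨1, by simp [slAct_X_inl, slAct_X_inr, one_apply]⟩
  refine ⟨signedSwap hab, ?_, ?_⟩
  · simp [slAct_X_inl, signedSwap_inv, signFlip, PEquiv.toMatrix_apply, hab.symm]
  · rw [slAct_X_inr]
    simp [signedSwap, signFlip, PEquiv.toMatrix_apply, Equiv.swap_apply_eq_iff, hab.symm]

end SignedSwap

/-- Let `K` be the fraction field of `R = ℂ[x,y]/⟨∑ xᵢ yᵢ − 1⟩` and let `ν` be an
additive `ℚ`-valued valuation on `K`, trivial on `ℂˣ`, invariant under the (extension to `K` of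
the) `SL_n(ℂ)`-action. Then `ν(x̄ₙ) + ν(ȳ₁) ≤ 0`. -/
theorem stmt5 (n : ℕ) (hn : 3 ≤ n)
    (ν : FractionRing (Rn n) → ℚ)
    (hmul : ∀ f g : FractionRing (Rn n), f ≠ 0 → g ≠ 0 → ν (f * g) = ν f + ν g)
    (hadd : ∀ f g : FractionRing (Rn n), f ≠ 0 → g ≠ 0 → f + g ≠ 0 →
      min (ν f) (ν g) ≤ ν (f + g))
    (σ : Matrix.SpecialLinearGroup (Fin n) ℂ → FractionRing (Rn n) ≃+* FractionRing (Rn n))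
    (hσ : ∀ (g : Matrix.SpecialLinearGroup (Fin n) ℂ) (p : MvPolynomial (Fin n ⊕ Fin n) ℂ),
      σ g (toK n p) = toK n (slAct n g p))
    (hinv : ∀ (g : Matrix.SpecialLinearGroup (Fin n) ℂ) (f : FractionRing (Rn n)),
      ν (σ g f) = ν f) :
    ν (toK n (X (Sum.inl ⟨n - 1, by omega⟩))) + ν (toK n (X (Sum.inr ⟨0, by omega⟩))) ≤ 0 := by
  have : NeZero n := ⟨by omega⟩
  have hν_one : ν 1 = 0 := by
    have := hmul 1 1 one_ne_zero one_ne_zero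
    rw [mul_one] at this
    linarith
  have hν_X_eq : ∀ a b : Fin n, ν (toK n (X (Sum.inl a))) = ν (toK n (X (Sum.inl b))) ∧
      ν (toK n (X (Sum.inr a))) = ν (toK n (X (Sum.inr b))) := by
    intro a b
    obtain ⟨g, hx, hy⟩ := exists_slAct_X_eq a b
    rw [← hx, ← hy, ← hσ, ← hσ, hinv, hinv]
    exact ⟨rfl, rfl⟩
  have hν_term : ∀ a b i : Fin n, ν (toK n (X (Sum.inl a))) + ν (toK n (X (Sum.inr b))) =
      ν (toK n (X (Sum.inl i)) * toK n (X (Sum.inr i))) := fun a b i => by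
    rw [hmul _ _ (toK_X_ne_zero _) (toK_X_ne_zero _), (hν_X_eq a i).1, (hν_X_eq b i).2]
  have h := sum_eq_zero_or_le_apply_sum ν hadd Finset.univ _ _
    fun i _ => Or.inr (hν_term ⟨n - 1, by omega⟩ ⟨0, by omega⟩ i).le
  rw [sum_toK_X_mul_X, hν_one] at h
  exact h.resolve_left one_ne_zero
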